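/- Let A ⊆ ℝ^d have Gaussian measure γ_d(A) = 1/2 and let ℓ be a positive integer, θ = π/(2ℓ). Then RS_A(θ) ≥ θ/π, where RS_A(θ) = P[1_A(z) ≠ 1_A(z')] for (z,z') a cos θ-correlated d-dimensional Gaussian pair. -/

import Mathlib

/-!
With `z_j = cos (jθ) g + sin (jθ) g'`, the map `(g, g') ↦ (z_j, -sin (jθ) g + cos (jθ) g')` preserves
the law of a pair of independent standard Gaussians, so each consecutive pair `(z_j, z_{j+1})` is
`cos θ`-correlated and `P[1_A(z_j) ≠ 1_A(z_{j+1})] = RS_A(θ)`. Since `z_0 = g` and `z_ℓ = g'` are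
independent, `P[1_A(z_0) ≠ 1_A(z_ℓ)] = 2 γ(A) γ(Aᶜ) = 1/2`, and the union bound over the `ℓ` steps
gives `1/2 ≤ ℓ · RS_A(θ)`.
-/

open MeasureTheory ProbabilityTheory Real

/-- The standard Gaussian measure on `ℝ^d`. -/
noncomputable def stdGaussian (d : ℕ) : Measure (Fin d → ℝ) :=
  Measure.pi fun _ => gaussianReal 0 1

/-- Rotation sensitivity `RS_A(θ) = P[1_A(z) ≠ 1_A(z')]` where `(z, z')` is a
`cos θ`-correlated `d`-dimensional Gaussian pair, realized as `z = g`,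
`z' = cos θ ⬝ g + sin θ ⬝ g'` with `g, g'` independent standard `d`-dimensional Gaussians. -/
noncomputable def RS (d : ℕ) (A : Set (Fin d → ℝ)) (θ : ℝ) : ENNReal :=
  ((stdGaussian d).prod (stdGaussian d))
    {p | (p.1 ∈ A) ≠ ((fun i => Real.cos θ * p.1 i + Real.sin θ * p.2 i) ∈ A)}

open scoped symmDiff ENNReal

instance (d : ℕ) : IsProbabilityMeasure (stdGaussian d) := by
  unfold _root_.stdGaussian; infer_instance

section PairRotation

variable {E : Type*} [AddCommGroup E] [Module ℝ E]

noncomputable def pairRotation (φ : ℝ) (p : E × E) : E × E :=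
  (cos φ • p.1 + sin φ • p.2, -sin φ • p.1 + cos φ • p.2)

lemma pairRotation_pairRotation (φ ψ : ℝ) (p : E × E) :
    pairRotation φ (pairRotation ψ p) = pairRotation (φ + ψ) p := by
  simp only [pairRotation, cos_add, sin_add]
  ext <;> module

def rotatedPreimage (A : Set E) (φ : ℝ) : Set (E × E) :=
  (fun p => (pairRotation φ p).1) ⁻¹' A

lemma preimage_pairRotation_rotatedPreimage (A : Set E) (φ ψ : ℝ) :
    pairRotation ψ ⁻¹' rotatedPreimage A φ = rotatedPreimage A (φ + ψ) := by
  ext p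
  simp only [rotatedPreimage, Set.mem_preimage, pairRotation_pairRotation]

variable [MeasurableSpace E]

lemma measure_rotatedPreimage_symmDiff_le {μ : Measure (E × E)}
    (hμ : ∀ φ, MeasurePreserving (pairRotation φ) μ μ) {A : Set E} (hA : MeasurableSet A)
    (φ : ℝ) (n : ℕ) :
    μ (rotatedPreimage A 0 ∆ rotatedPreimage A (n * φ)) ≤
      n * μ (rotatedPreimage A 0 ∆ rotatedPreimage A φ) := by
  have hmeas (ψ : ℝ) : MeasurableSet (rotatedPreimage A ψ) :=
    (hμ ψ).measurable (measurable_fst hA)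
  induction n with
  | zero => simp
  | succ n ih =>
    have hstep : μ (rotatedPreimage A (n * φ) ∆ rotatedPreimage A ((n + 1 : ℕ) * φ)) =
        μ (rotatedPreimage A 0 ∆ rotatedPreimage A φ) := by
      rw [← (hμ (n * φ)).measure_preimage ((hmeas 0).symmDiff (hmeas φ)).nullMeasurableSet,
        Set.preimage_symmDiff, preimage_pairRotation_rotatedPreimage,
        preimage_pairRotation_rotatedPreimage, zero_add, Nat.cast_succ, add_one_mul, add_comm φ]
    calc _ ≤ μ (rotatedPreimage A 0 ∆ rotatedPreimage A (n * φ)) +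
          μ (rotatedPreimage A (n * φ) ∆ rotatedPreimage A ((n + 1 : ℕ) * φ)) :=
          measure_symmDiff_le _ _ _
      _ ≤ n * μ (rotatedPreimage A 0 ∆ rotatedPreimage A φ) +
          μ (rotatedPreimage A 0 ∆ rotatedPreimage A φ) := by rw [hstep]; gcongr
      _ = _ := by push_cast; ring

end PairRotation

lemma measurePreserving_pairRotation_gaussianReal_prod (φ : ℝ) :
    MeasurePreserving (pairRotation (E := ℝ) φ) ((gaussianReal 0 1).prod (gaussianReal 0 1))
      ((gaussianReal 0 1).prod (gaussianReal 0 1)) := by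
  -- On `ℂ`, `pairRotation φ` is multiplication by `e^{-iφ}`, an isometry.
  have hℂ : MeasurePreserving Complex.measurableEquivRealProd (stdGaussian ℂ)
      ((gaussianReal 0 1).prod (gaussianReal 0 1)) := by
    refine ⟨Complex.measurableEquivRealProd.measurable, ?_⟩
    rw [stdGaussian_eq_map_pi_orthonormalBasis Complex.orthonormalBasisOneI,
      Measure.map_map (by fun_prop) (by fun_prop)]
    convert (measurePreserving_piFinTwo fun _ => gaussianReal 0 1).map_eq using 2
    ext x <;> simp
  have hrot : MeasurePreserving (rotation (Circle.exp (-φ))) (stdGaussian ℂ) (stdGaussian ℂ) :=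
    ⟨by fun_prop, stdGaussian_map _⟩
  convert hℂ.comp (hrot.comp hℂ.symm) using 1
  funext p
  simp only [pairRotation, Function.comp_apply, rotation_apply, Circle.coe_exp,
    Complex.measurableEquivRealProd_apply, Complex.measurableEquivRealProd_symm_apply,
    Complex.mul_re, Complex.mul_im, Complex.exp_ofReal_mul_I_re, Complex.exp_ofReal_mul_I_im,
    cos_neg, sin_neg, smul_eq_mul]
  ext <;> ring

lemma measurePreserving_pairRotation_pi_gaussianReal {ι : Type*} [Fintype ι] (φ : ℝ) :
    MeasurePreserving (pairRotation φ)
      ((Measure.pi fun _ : ι => gaussianReal 0 1).prod (Measure.pi fun _ => gaussianReal 0 1))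
      ((Measure.pi fun _ : ι => gaussianReal 0 1).prod (Measure.pi fun _ => gaussianReal 0 1)) := by
  have e := measurePreserving_arrowProdEquivProdArrow ℝ ℝ ι (fun _ => gaussianReal 0 1)
    (fun _ => gaussianReal 0 1)
  have hpi := measurePreserving_pi _ _
    fun _ : ι => measurePreserving_pairRotation_gaussianReal_prod φ
  exact e.comp (hpi.comp e.symm)

lemma measure_prod_symmDiff_preimage_fst_snd {α β : Type*} [MeasurableSpace α]
    [MeasurableSpace β] (μ : Measure α) (ν : Measure β) [SigmaFinite ν] {s : Set α} {t : Set β}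
    (hs : MeasurableSet s) (ht : MeasurableSet t) :
    μ.prod ν ((Prod.fst ⁻¹' s) ∆ (Prod.snd ⁻¹' t)) = μ s * ν tᶜ + μ sᶜ * ν t := by
  rw [measure_symmDiff_eq (measurable_fst hs).nullMeasurableSet
    (measurable_snd ht).nullMeasurableSet, Set.sdiff_eq, Set.sdiff_eq, ← Set.preimage_compl,
    ← Set.preimage_compl, ← Set.prod_eq, Set.inter_comm, ← Set.prod_eq, Measure.prod_prod,
    Measure.prod_prod]

lemma RS_eq_measure_symmDiff_rotatedPreimage (d : ℕ) (A : Set (Fin d → ℝ)) (θ : ℝ) :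
    RS d A θ =
      (stdGaussian d).prod (stdGaussian d) (rotatedPreimage A 0 ∆ rotatedPreimage A θ) := by
  rw [RS]
  congr 1
  ext p
  simp only [ne_eq, eq_iff_iff, Set.mem_ofPred_eq, rotatedPreimage, pairRotation, cos_zero,
    one_smul, sin_zero, zero_smul, add_zero, Set.mem_symmDiff, Set.mem_preimage]
  tauto

theorem rotation_sensitivity_lower_bound (d : ℕ) (A : Set (Fin d → ℝ))
    (hA : MeasurableSet A) (hvol : stdGaussian d A = 1 / 2)
    (ℓ : ℕ) (hℓ : 0 < ℓ) (θ : ℝ) (hθ : θ = π / (2 * ℓ)) :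
    ENNReal.ofReal (θ / π) ≤ RS d A θ := by
  set μ := (stdGaussian d).prod (stdGaussian d)
  have hcompl : stdGaussian d Aᶜ = 1 / 2 := by
    rw [prob_compl_eq_one_sub hA, hvol, one_div, ENNReal.one_sub_inv_two]
  have hhalf : (2⁻¹ : ℝ≥0∞) ≤ ℓ * RS d A θ := calc
    2⁻¹ = μ ((Prod.fst ⁻¹' A) ∆ (Prod.snd ⁻¹' A)) := by
      rw [measure_prod_symmDiff_preimage_fst_snd _ _ hA hA, hvol, hcompl, ← add_mul, one_div,
        ENNReal.inv_two_add_inv_two, one_mul]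
    _ = μ (rotatedPreimage A 0 ∆ rotatedPreimage A (ℓ * θ)) := by
      rw [show (ℓ : ℝ) * θ = π / 2 by rw [hθ]; field_simp]
      simp [rotatedPreimage, pairRotation]
    _ ≤ ℓ * μ (rotatedPreimage A 0 ∆ rotatedPreimage A θ) :=
      measure_rotatedPreimage_symmDiff_le measurePreserving_pairRotation_pi_gaussianReal hA θ ℓ
    _ = ℓ * RS d A θ := by rw [RS_eq_measure_symmDiff_rotatedPreimage]
  have hθπ : ENNReal.ofReal (θ / π) = 2⁻¹ * (ℓ : ℝ≥0∞)⁻¹ := by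
    rw [hθ, div_div_cancel_left' pi_ne_zero, ENNReal.ofReal_inv_of_pos (by positivity),
      ENNReal.ofReal_mul zero_le_two, ENNReal.ofReal_ofNat, ENNReal.ofReal_natCast,
      ENNReal.mul_inv (by simp) (by simp)]
  rw [hθπ, mul_comm, ENNReal.inv_mul_le_iff (by positivity) (by simp)]
  exact hhalf
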